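/- Let f : X → 𝒢(Z,C) be a convex function, x ∈ dom f and u ∈ X. Then f′(x,u) = cl ⋃_{t>0} (1/t)·(f(x+tu) ⊖ f(x)), f′(x,0) = 0⁺f(x), and the map u ↦ f′(x,u) is sublinear: f′(x,su) = s·f′(x,u) for all s > 0, and f′(x, su₁ + (1−s)u₂) ⊇ cl(s·f′(x,u₁) + (1−s)·f′(x,u₂)) for all u₁, u₂ ∈ X and s ∈ (0,1). -/

import Mathlib

open Set Pointwise

noncomputable section

variable {Z : Type*} [AddCommGroup Z] [Module ℝ Z] [TopologicalSpace Z]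

/-- The inf-residual `A ⊖ B = {z : B + {z} ⊆ A}`. -/
def resid (A B : Set Z) : Set Z := {z : Z | B + {z} ⊆ A}

/-- The recession cone `0⁺A`, with the convention `0⁺∅ = ∅`. -/
def recCone (A : Set Z) : Set Z := {z : Z | A.Nonempty ∧ A + {z} ⊆ A}

/-- `A ⊕ B = cl (A + B)`. -/
def oplus (A B : Set Z) : Set Z := closure (A + B)

/-- Membership in `𝒢(Z,C)`: `A = cl co (A + C)`. -/
def IsG (C A : Set Z) : Prop := A = closure (convexHull ℝ (A + C))

/-- The set `C⁻ \ {0}` of nonzero elements of the negative dual cone. -/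
def negDualNZ (C : Set Z) : Set (Z →L[ℝ] ℝ) :=
  {p : Z →L[ℝ] ℝ | (∀ c ∈ C, p c ≤ 0) ∧ p ≠ 0}

/-- `inf {-z*(z) : z ∈ A}` as an extended real. -/
def scal (p : Z →L[ℝ] ℝ) (A : Set Z) : EReal :=
  sInf ((fun z => ((-(p z) : ℝ) : EReal)) '' A)

/-- Support function `σ(z*|A) = sup {z*(z) : z ∈ A}` as an extended real. -/
def suppF (p : Z →L[ℝ] ℝ) (A : Set Z) : EReal :=
  sSup ((fun z => ((p z : ℝ) : EReal)) '' A)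

/-- Inf-residuation on the extended reals: `r ⊖ s = inf {t ∈ ℝ : r ≤ s + t}`. -/
def eresid (r s : EReal) : EReal :=
  sInf ((fun t : ℝ => (t : EReal)) '' {t : ℝ | r ≤ s + (t : EReal)})

variable {X : Type*} [AddCommGroup X] [Module ℝ X]

/-- The scalarization `φ_{f,z*}(x) = inf {-z*(z) : z ∈ f(x)}`. -/
def phi (f : X → Set Z) (p : Z →L[ℝ] ℝ) (x : X) : EReal := scal p (f x)

/-- Convexity for set-valued functions:
`f(t x₁ + (1-t) x₂) ⊇ cl (t f(x₁) + (1-t) f(x₂))`. -/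
def ConvexSV (f : X → Set Z) : Prop :=
  ∀ x₁ x₂ : X, ∀ t : ℝ, t ∈ Ioo (0:ℝ) 1 →
    closure (t • f x₁ + (1 - t) • f x₂) ⊆ f (t • x₁ + (1 - t) • x₂)

/-- The set-valued directional derivative
`f′(x,u) = ⋂_{t₀>0} cl co ⋃_{0<t<t₀} (1/t)•(f(x+tu) ⊖ f(x))`. -/
def sder (f : X → Set Z) (x u : X) : Set Z :=
  ⋂ t₀ ∈ Ioi (0:ℝ), closure (convexHull ℝ
    (⋃ t ∈ Ioo (0:ℝ) t₀, (1 / t) • resid (f (x + t • u)) (f x)))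

/-- The scalar Dini derivative `φ′_{f,z*}(x,u) = inf_{t>0} (1/t)(φ(x+tu) ⊖ φ(x))`. -/
def phiDer (f : X → Set Z) (p : Z →L[ℝ] ℝ) (x u : X) : EReal :=
  ⨅ t ∈ Ioi (0:ℝ), (((1 / t : ℝ)) : EReal) * eresid (phi f p (x + t • u)) (phi f p x)

end

/-!
For convex `f`, the difference quotients `(1/t) • (f (x + t • u) ⊖ f x)` grow as `t ↓ 0`, so the
union over `0 < t < t₀` does not depend on `t₀` and is a directed union of convex sets; hence the
convex hull and the intersection over `t₀` in `f′(x,u)` can be dropped. Positive homogeneity is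
the reparametrization `t ↦ s * t`, sublinearity comes from combining two quotients at a common `t`,
and at `u = 0` every quotient is the closed convex cone `f x ⊖ f x = 0⁺f(x)`.
-/

section Resid

variable {Z : Type*} [AddCommGroup Z] {A B : Set Z} {z : Z}

lemma mem_resid : z ∈ resid A B ↔ ∀ b ∈ B, b + z ∈ A := by
  change (_ : Set Z) ⊆ _ ↔ _
  rw [add_singleton, image_subset_iff]
  rfl

lemma add_mem_resid_self {w : Z} (hz : z ∈ resid A A) (hw : w ∈ resid A A) :
    z + w ∈ resid A A := by
  rw [mem_resid] at hz hw ⊢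
  intro a ha
  simpa only [add_assoc] using hw _ (hz a ha)

lemma nsmul_mem_resid_self (hz : z ∈ resid A A) (n : ℕ) : n • z ∈ resid A A := by
  induction n with
  | zero => simp [mem_resid]
  | succ n ih => simpa only [succ_nsmul] using add_mem_resid_self ih hz

lemma recCone_eq_resid (hA : A.Nonempty) : recCone A = resid A A := by
  ext z
  simp [recCone, resid, hA]

lemma isClosed_resid [TopologicalSpace Z] [ContinuousAdd Z] (hA : IsClosed A) (B : Set Z) :
    IsClosed (resid A B) := by
  have h : resid A B = ⋂ b ∈ B, (b + ·) ⁻¹' A := by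
    ext z
    simp only [mem_resid, mem_iInter, mem_preimage]
  rw [h]
  exact isClosed_biInter fun b _ => hA.preimage (continuous_const_add b)

variable [Module ℝ Z]

lemma convex_resid (hA : Convex ℝ A) (B : Set Z) : Convex ℝ (resid A B) := by
  intro z₁ h₁ z₂ h₂ a b ha hb hab
  rw [mem_resid] at h₁ h₂ ⊢
  intro c hc
  convert hA (h₁ c hc) (h₂ c hc) ha hb hab using 1
  match_scalars <;> linarith

-- `a + r • z` lies on the segment from `a` to `a + n • z` once `r ≤ n`.
lemma Convex.smul_mem_resid_self (hA : Convex ℝ A) (hz : z ∈ resid A A) {r : ℝ} (hr : 0 ≤ r) :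
    r • z ∈ resid A A := by
  set n : ℕ := ⌈r⌉₊ + 1
  have hn : (0 : ℝ) < n := by positivity
  have hrn : r / n ∈ Icc (0 : ℝ) 1 :=
    ⟨by positivity, (div_le_one hn).2 (by simpa [n] using (Nat.le_ceil r).trans (by linarith))⟩
  rw [mem_resid]
  intro a ha
  have hnz := mem_resid.1 (nsmul_mem_resid_self hz n) a ha
  rw [← Nat.cast_smul_eq_nsmul ℝ] at hnz
  convert hA.add_smul_mem ha hnz hrn using 2
  rw [smul_smul, div_mul_cancel₀ r hn.ne']

lemma Convex.smul_resid_self (hA : Convex ℝ A) {r : ℝ} (hr : 0 < r) :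
    r • resid A A = resid A A := by
  refine subset_antisymm ?_ fun z hz => ?_
  · rintro _ ⟨z, hz, rfl⟩
    exact hA.smul_mem_resid_self hz hr.le
  · rw [mem_smul_set_iff_inv_smul_mem₀ hr.ne']
    exact hA.smul_mem_resid_self hz (inv_nonneg.2 hr.le)

end Resid

section DiffQuot

variable {Z : Type*} [AddCommGroup Z] [Module ℝ Z]
  {X : Type*} [AddCommGroup X] [Module ℝ X] {f : X → Set Z} {x u : X} {s t : ℝ}

variable (f x u) in
def diffQuot (t : ℝ) : Set Z := (1 / t) • resid (f (x + t • u)) (f x)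

lemma mem_diffQuot (ht : t ≠ 0) {z : Z} :
    z ∈ diffQuot f x u t ↔ ∀ b ∈ f x, b + t • z ∈ f (x + t • u) := by
  rw [diffQuot, mem_smul_set_iff_inv_smul_mem₀ (one_div_ne_zero ht), mem_resid, one_div, inv_inv]

lemma diffQuot_zero (t : ℝ) : diffQuot f x 0 t = (1 / t) • resid (f x) (f x) := by
  rw [diffQuot, smul_zero, add_zero]

lemma diffQuot_smul (hs : s ≠ 0) (t : ℝ) :
    diffQuot f x (s • u) t = s • diffQuot f x u (s * t) := by
  rw [diffQuot, diffQuot, smul_smul, smul_smul, mul_comm t s]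
  congr 1
  field_simp

variable [TopologicalSpace Z]

lemma IsG.convex [IsTopologicalAddGroup Z] [ContinuousSMul ℝ Z] {C A : Set Z} (h : IsG C A) :
    Convex ℝ A :=
  h ▸ (convex_convexHull ℝ _).closure

lemma IsG.isClosed {C A : Set Z} (h : IsG C A) : IsClosed A :=
  h ▸ isClosed_closure

lemma ConvexSV.smul_add_smul_mem (hf : ConvexSV f) {x₁ x₂ : X} {a₁ a₂ : Z} (hs : s ∈ Ioo 0 1)
    (h₁ : a₁ ∈ f x₁) (h₂ : a₂ ∈ f x₂) : s • a₁ + (1 - s) • a₂ ∈ f (s • x₁ + (1 - s) • x₂) :=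
  hf x₁ x₂ s hs (subset_closure (add_mem_add (smul_mem_smul_set h₁) (smul_mem_smul_set h₂)))

-- `x + t • u` is a convex combination of `x + s • u` and `x`.
lemma ConvexSV.antitoneOn_diffQuot (hf : ConvexSV f) : AntitoneOn (diffQuot f x u) (Ioi 0) := by
  intro t (ht : 0 < t) s (hs : 0 < s) hts z hz
  rcases hts.eq_or_lt with rfl | hlt
  · exact hz
  rw [mem_diffQuot hs.ne'] at hz
  rw [mem_diffQuot ht.ne']
  intro b hb
  set l := t / s
  have hls : l * s = t := div_mul_cancel₀ t hs.ne'
  have hl : l ∈ Ioo (0 : ℝ) 1 := ⟨div_pos ht hs, (div_lt_one hs).2 hlt⟩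
  have hb' : b + t • z = l • (b + s • z) + (1 - l) • b := by rw [← hls]; module
  have hx' : x + t • u = l • (x + s • u) + (1 - l) • x := by rw [← hls]; module
  rw [hb', hx']
  exact hf.smul_add_smul_mem hl (hz b hb) hb

lemma ConvexSV.smul_diffQuot_add_smul_diffQuot_subset (hf : ConvexSV f) {u₁ u₂ : X}
    (hs : s ∈ Ioo 0 1) (ht : t ≠ 0) :
    s • diffQuot f x u₁ t + (1 - s) • diffQuot f x u₂ t
      ⊆ diffQuot f x (s • u₁ + (1 - s) • u₂) t := by
  rintro _ ⟨_, ⟨z₁, hz₁, rfl⟩, _, ⟨z₂, hz₂, rfl⟩, rfl⟩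
  rw [mem_diffQuot ht] at hz₁ hz₂ ⊢
  intro b hb
  have hb' : b + t • (s • z₁ + (1 - s) • z₂) = s • (b + t • z₁) + (1 - s) • (b + t • z₂) := by
    module
  have hx' : x + t • (s • u₁ + (1 - s) • u₂) = s • (x + t • u₁) + (1 - s) • (x + t • u₂) := by
    module
  rw [hb', hx']
  exact hf.smul_add_smul_mem hs (hz₁ b hb) (hz₂ b hb)

lemma ConvexSV.biUnion_Ioo_diffQuot (hf : ConvexSV f) {t₀ : ℝ} (ht₀ : 0 < t₀) :
    ⋃ t ∈ Ioo 0 t₀, diffQuot f x u t = ⋃ t ∈ Ioi 0, diffQuot f x u t := by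
  refine (biUnion_mono (fun t ht => ht.1) fun _ _ => subset_rfl).antisymm
    (iUnion₂_subset fun t ht => ?_)
  rcases lt_or_ge t t₀ with htt₀ | ht₀t
  · exact subset_biUnion_of_mem (u := diffQuot f x u) ⟨ht, htt₀⟩
  · refine (hf.antitoneOn_diffQuot (half_pos ht₀) ht (by linarith)).trans ?_
    exact subset_biUnion_of_mem (u := diffQuot f x u) ⟨half_pos ht₀, half_lt_self ht₀⟩

lemma ConvexSV.convex_biUnion_diffQuot (hf : ConvexSV f) (hconv : ∀ y, Convex ℝ (f y)) :
    Convex ℝ (⋃ t ∈ Ioi 0, diffQuot f x u t) := by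
  rw [biUnion_eq_iUnion]
  refine Directed.convex_iUnion (fun t₁ t₂ => ?_) fun t => (convex_resid (hconv _) _).smul _
  have hmin : min t₁.1 t₂.1 ∈ Ioi 0 := lt_min (mem_Ioi.1 t₁.2) (mem_Ioi.1 t₂.2)
  exact ⟨⟨_, hmin⟩, hf.antitoneOn_diffQuot hmin t₁.2 (min_le_left _ _),
    hf.antitoneOn_diffQuot hmin t₂.2 (min_le_right _ _)⟩

lemma ConvexSV.sder_eq_closure_biUnion (hf : ConvexSV f) (hconv : ∀ y, Convex ℝ (f y)) :
    sder f x u = closure (⋃ t ∈ Ioi 0, diffQuot f x u t) := by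
  have h : ∀ t₀ ∈ Ioi (0 : ℝ), closure (convexHull ℝ (⋃ t ∈ Ioo 0 t₀, diffQuot f x u t))
      = closure (⋃ t ∈ Ioi 0, diffQuot f x u t) := fun t₀ ht₀ => by
    rw [hf.biUnion_Ioo_diffQuot ht₀, (hf.convex_biUnion_diffQuot hconv).convexHull_eq]
  exact (iInter₂_congr h).trans (biInter_const nonempty_Ioi _)

end DiffQuot

section Sder

variable {Z : Type*} [AddCommGroup Z] [Module ℝ Z] [TopologicalSpace Z]
  {X : Type*} [AddCommGroup X] [Module ℝ X] {f : X → Set Z} {x u : X} {s : ℝ}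

lemma ConvexSV.sder_zero [ContinuousAdd Z] (hf : ConvexSV f) (hconv : ∀ y, Convex ℝ (f y))
    (hclosed : IsClosed (f x)) (hx : (f x).Nonempty) : sder f x 0 = recCone (f x) := by
  have hU : ⋃ t ∈ Ioi (0 : ℝ), diffQuot f x 0 t = resid (f x) (f x) :=
    calc ⋃ t ∈ Ioi (0 : ℝ), diffQuot f x 0 t = ⋃ t ∈ Ioi (0 : ℝ), resid (f x) (f x) :=
          iUnion₂_congr fun t ht => by
            rw [diffQuot_zero, (hconv x).smul_resid_self (one_div_pos.2 ht)]
      _ = resid (f x) (f x) := biUnion_const nonempty_Ioi _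
  rw [hf.sder_eq_closure_biUnion hconv, hU, (isClosed_resid hclosed _).closure_eq,
    recCone_eq_resid hx]

lemma ConvexSV.sder_smul [ContinuousConstSMul ℝ Z] (hf : ConvexSV f)
    (hconv : ∀ y, Convex ℝ (f y)) (hs : 0 < s) : sder f x (s • u) = s • sder f x u := by
  rw [hf.sder_eq_closure_biUnion hconv, hf.sder_eq_closure_biUnion hconv,
    ← closure_smul₀' hs.ne', smul_set_iUnion₂]
  simp_rw [diffQuot_smul hs.ne']
  calc closure (⋃ t ∈ Ioi 0, s • diffQuot f x u (s * t))
      = closure (⋃ r ∈ (s * ·) '' Ioi 0, s • diffQuot f x u r) := by rw [biUnion_image]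
    _ = _ := by rw [image_const_mul_Ioi_zero hs]

lemma ConvexSV.smul_biUnion_diffQuot_add_smul_subset (hf : ConvexSV f) {u₁ u₂ : X}
    (hs : s ∈ Ioo 0 1) :
    s • (⋃ t ∈ Ioi 0, diffQuot f x u₁ t) + (1 - s) • (⋃ t ∈ Ioi 0, diffQuot f x u₂ t)
      ⊆ ⋃ t ∈ Ioi 0, diffQuot f x (s • u₁ + (1 - s) • u₂) t := by
  rintro _ ⟨_, ⟨z₁, hz₁, rfl⟩, _, ⟨z₂, hz₂, rfl⟩, rfl⟩
  obtain ⟨t₁, ht₁, hz₁⟩ := mem_iUnion₂.1 hz₁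
  obtain ⟨t₂, ht₂, hz₂⟩ := mem_iUnion₂.1 hz₂
  have ht : min t₁ t₂ ∈ Ioi 0 := lt_min (mem_Ioi.1 ht₁) (mem_Ioi.1 ht₂)
  refine mem_iUnion₂.2 ⟨_, ht, hf.smul_diffQuot_add_smul_diffQuot_subset hs (ne_of_gt ht) ?_⟩
  exact add_mem_add
    (smul_mem_smul_set (hf.antitoneOn_diffQuot ht ht₁ (min_le_left _ _) hz₁))
    (smul_mem_smul_set (hf.antitoneOn_diffQuot ht ht₂ (min_le_right _ _) hz₂))

lemma ConvexSV.closure_smul_sder_add_smul_subset [ContinuousAdd Z] [ContinuousSMul ℝ Z]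
    (hf : ConvexSV f) (hconv : ∀ y, Convex ℝ (f y)) {u₁ u₂ : X} (hs : s ∈ Ioo 0 1) :
    closure (s • sder f x u₁ + (1 - s) • sder f x u₂) ⊆ sder f x (s • u₁ + (1 - s) • u₂) := by
  simp only [hf.sder_eq_closure_biUnion hconv]
  refine closure_minimal ?_ isClosed_closure
  rintro _ ⟨_, ⟨z₁, hz₁, rfl⟩, _, ⟨z₂, hz₂, rfl⟩, rfl⟩
  exact map_mem_closure₂ (f := fun a b => s • a + (1 - s) • b) (by fun_prop) hz₁ hz₂
    fun a ha b hb => hf.smul_biUnion_diffQuot_add_smul_subset hs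
      (add_mem_add (smul_mem_smul_set ha) (smul_mem_smul_set hb))

end Sder

theorem stmt_8_general
  {Z : Type*} [AddCommGroup Z] [Module ℝ Z] [TopologicalSpace Z]
  [IsTopologicalAddGroup Z] [ContinuousSMul ℝ Z]
  {X : Type*} [AddCommGroup X] [Module ℝ X]
  (C : Set Z)
  (f : X → Set Z) (hG : ∀ x, IsG C (f x)) (hf : ConvexSV f)
  (x : X) (hx : (f x).Nonempty) (u : X) :
    sder f x u = closure (⋃ t ∈ Ioi (0:ℝ), (1 / t) • resid (f (x + t • u)) (f x))
    ∧ sder f x 0 = recCone (f x)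
    ∧ (∀ s : ℝ, 0 < s → sder f x (s • u) = s • sder f x u)
    ∧ (∀ u₁ u₂ : X, ∀ s ∈ Ioo (0:ℝ) 1,
        closure (s • sder f x u₁ + (1 - s) • sder f x u₂)
          ⊆ sder f x (s • u₁ + (1 - s) • u₂)) := by
  have hconv : ∀ y, Convex ℝ (f y) := fun y => (hG y).convex
  exact ⟨hf.sder_eq_closure_biUnion hconv, hf.sder_zero hconv (hG x).isClosed hx,
    fun s hs => hf.sder_smul hconv hs,
    fun u₁ u₂ s hs => hf.closure_smul_sder_add_smul_subset hconv hs⟩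

theorem stmt_8
  {Z : Type*} [AddCommGroup Z] [Module ℝ Z] [TopologicalSpace Z]
  [IsTopologicalAddGroup Z] [ContinuousSMul ℝ Z] [LocallyConvexSpace ℝ Z] [T2Space Z]
  {X : Type*} [AddCommGroup X] [Module ℝ X]
  (C : Set Z) (hCclosed : IsClosed C) (hCconv : Convex ℝ C)
  (hCcone : ∀ c ∈ C, ∀ r : ℝ, 0 < r → r • c ∈ C) (hC0 : (0:Z) ∈ C)
  (f : X → Set Z) (hG : ∀ x, IsG C (f x)) (hf : ConvexSV f)
  (x : X) (hx : (f x).Nonempty) (u : X) :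
    sder f x u = closure (⋃ t ∈ Ioi (0:ℝ), (1 / t) • resid (f (x + t • u)) (f x))
    ∧ sder f x 0 = recCone (f x)
    ∧ (∀ s : ℝ, 0 < s → sder f x (s • u) = s • sder f x u)
    ∧ (∀ u₁ u₂ : X, ∀ s ∈ Ioo (0:ℝ) 1,
        closure (s • sder f x u₁ + (1 - s) • sder f x u₂)
          ⊆ sder f x (s • u₁ + (1 - s) • u₂)) :=
  stmt_8_general C f hG hf x hx u
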